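/- The relations K₁₂ K₁₃ K₂₃ = θ₀ P₁₃ K₂₃ and K₁₂ P₂₃ K₁₂ = K₁₂ hold in the triple graded tensor product. -/

import Mathlib

open Matrix BigOperators Finset

noncomputable section

namespace OspYangian

variable (M N : ℕ) (θ₀ : ℤ)

/-- The grading exponent `[i] ∈ {0,1}`, defined so that `(-1)^[i] = θ₀` for `i < M`
and `(-1)^[i] = -θ₀` for `M ≤ i < M+N` (0-indexed). -/
def gr (i : Fin (M + N)) : ℕ :=
  if (i : ℕ) < M then (if θ₀ = 1 then 0 else 1) else (if θ₀ = 1 then 1 else 0)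

/-- The sign `θ_i`: `+1` for `i < M + N/2`, `-1` otherwise (0-indexed). -/
def th (i : Fin (M + N)) : ℂ :=
  if (i : ℕ) < M + N / 2 then 1 else -1

/-- The conjugate index `ī`: `M+1-i` resp. `2M+N+1-i` in 1-indexed notation. -/
def bar (i : Fin (M + N)) : Fin (M + N) :=
  if _h : (i : ℕ) < M then ⟨M - 1 - (i : ℕ), by omega⟩
  else ⟨2 * M + N - 1 - (i : ℕ), by have := i.isLt; omega⟩

/-- Coefficient matrices of elements of the graded tensor square of `gl(M|N)`:
the entry at `((i,k),(j,l))` is the coefficient of `E_{ij} ⊗ E_{kl}`. -/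
abbrev Mat := Matrix (Fin (M + N) × Fin (M + N)) (Fin (M + N) × Fin (M + N)) ℂ

/-- Multiplication in the graded tensor product algebra:
`(A⊗B)(C⊗D) = (-1)^{[B][C]} AC ⊗ BD` on homogeneous elements. -/
def gmul (A B : Mat M N) : Mat M N := fun p q =>
  ∑ j : Fin (M + N), ∑ l : Fin (M + N),
    (-1 : ℂ) ^ ((gr M N θ₀ p.2 + gr M N θ₀ l) * (gr M N θ₀ j + gr M N θ₀ q.1)) *
      A p (j, l) * B (j, l) q

/-- The superpermutation `P = Σ_{i,j} (-1)^{[j]} E_{ij} ⊗ E_{ji}`. -/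
def P : Mat M N := fun p q =>
  if p.1 = q.2 ∧ p.2 = q.1 then (-1 : ℂ) ^ gr M N θ₀ p.2 else 0

/-- `K = Σ_{i,j} (-1)^{[i][j]} θ_i θ_j E_{j̄ ī} ⊗ E_{ji}`. -/
def K : Mat M N := fun p q =>
  if p.1 = bar M N p.2 ∧ q.1 = bar M N q.2 then
    (-1 : ℂ) ^ (gr M N θ₀ q.2 * gr M N θ₀ p.2) * th M N q.2 * th M N p.2
  else 0

/-- Coefficient matrices of elements of the graded triple tensor product. -/
abbrev Mat3 := Matrix (Fin (M + N) × Fin (M + N) × Fin (M + N))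
  (Fin (M + N) × Fin (M + N) × Fin (M + N)) ℂ

/-- Multiplication in the graded triple tensor product algebra: the sign is
`(-1)^{(d₂+d₃)e₁ + d₃e₂}` where `d_a`, `e_a` are the degrees of the `a`-th factors. -/
def gmul3 (A B : Mat3 M N) : Mat3 M N := fun p q =>
  ∑ m : Fin (M + N) × Fin (M + N) × Fin (M + N),
    (-1 : ℂ) ^ ((gr M N θ₀ p.2.1 + gr M N θ₀ m.2.1 + gr M N θ₀ p.2.2 + gr M N θ₀ m.2.2) *
          (gr M N θ₀ m.1 + gr M N θ₀ q.1) +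
        (gr M N θ₀ p.2.2 + gr M N θ₀ m.2.2) * (gr M N θ₀ m.2.1 + gr M N θ₀ q.2.1)) *
      A p m * B m q

/-- Embedding `X ↦ X₁₂ = X ⊗ I` into the triple tensor product. -/
def emb12 (X : Mat M N) : Mat3 M N := fun p q =>
  if p.2.2 = q.2.2 then X (p.1, p.2.1) (q.1, q.2.1) else 0

/-- Embedding `X ↦ X₁₃` into the triple tensor product. -/
def emb13 (X : Mat M N) : Mat3 M N := fun p q =>
  if p.2.1 = q.2.1 then X (p.1, p.2.2) (q.1, q.2.2) else 0

/-- Embedding `X ↦ X₂₃ = I ⊗ X` into the triple tensor product. -/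
def emb23 (X : Mat M N) : Mat3 M N := fun p q =>
  if p.1 = q.1 then X p.2 q.2 else 0

/-
In each product of two embedded operators below, a row and a column are linked through at most one
intermediate basis index, so every entry is a single term and the products have explicit closed
forms. Comparing them leaves sign identities, checked on the parities `[i] ∈ {0, 1}`. The one
non-combinatorial input is `θ_i = θ₀ (-1)^[i] θ_ī`, which is where `θ₀ = ±1` and `N` even enter.
-/

section

variable {M N θ₀}

lemma val_bar_lt_iff (i : Fin (M + N)) : (bar M N i : ℕ) < M ↔ (i : ℕ) < M := by
  unfold bar; split_ifs <;> simp <;> omega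

lemma bar_involutive : Function.Involutive (bar M N) := fun i => by
  have hlt := i.isLt
  have hbar := val_bar_lt_iff i
  unfold bar at hbar ⊢
  ext
  split_ifs at hbar ⊢ <;> simp_all <;> omega

lemma eq_bar_comm {i j : Fin (M + N)} : i = bar M N j ↔ j = bar M N i := by
  rw [eq_comm, bar_involutive.eq_iff]

lemma gr_bar (i : Fin (M + N)) : gr M N θ₀ (bar M N i) = gr M N θ₀ i := by
  simp only [gr, val_bar_lt_iff]

lemma gr_eq_zero_or_one (i : Fin (M + N)) : gr M N θ₀ i = 0 ∨ gr M N θ₀ i = 1 := by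
  unfold gr; split_ifs <;> simp

lemma th_eq_one_or_neg_one (i : Fin (M + N)) : th M N i = 1 ∨ th M N i = -1 := by
  unfold th; split_ifs <;> simp

lemma th_eq_mul_th_bar (hθ : θ₀ = 1 ∨ θ₀ = -1) (hN : Even N) (i : Fin (M + N)) :
    th M N i = θ₀ * (-1) ^ gr M N θ₀ i * th M N (bar M N i) := by
  obtain ⟨k, rfl⟩ := hN
  have hlt := i.isLt
  have hk : (k + k) / 2 = k := by omega
  unfold th gr bar
  rcases hθ with rfl | rfl <;> by_cases h : (i : ℕ) < M <;>
    simp only [h, hk, dif_pos, dif_neg, if_pos, if_neg, not_false_eq_true] <;>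
    split_ifs <;> norm_num <;> omega

lemma gmul3_apply_eq_single {A B : Mat3 M N} {p q : Fin (M + N) × Fin (M + N) × Fin (M + N)}
    (m₀ : Fin (M + N) × Fin (M + N) × Fin (M + N))
    (h : ∀ m, A p m ≠ 0 → B m q ≠ 0 → m = m₀) :
    gmul3 M N θ₀ A B p q =
      (-1 : ℂ) ^ ((gr M N θ₀ p.2.1 + gr M N θ₀ m₀.2.1 + gr M N θ₀ p.2.2 + gr M N θ₀ m₀.2.2) *
          (gr M N θ₀ m₀.1 + gr M N θ₀ q.1) +
        (gr M N θ₀ p.2.2 + gr M N θ₀ m₀.2.2) * (gr M N θ₀ m₀.2.1 + gr M N θ₀ q.2.1)) *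
      A p m₀ * B m₀ q := by
  refine Finset.sum_eq_single m₀ (fun m _ hm => ?_) (by simp)
  by_cases hA : A p m = 0
  · simp [hA]
  by_cases hB : B m q = 0
  · simp [hB]
  exact absurd (h m hA hB) hm

lemma gmul3_K₁₃_K₂₃_apply (i j k i' j' k' : Fin (M + N)) :
    gmul3 M N θ₀ (emb13 M N (K M N θ₀)) (emb23 M N (K M N θ₀)) (i, j, k) (i', j', k') =
      if i = bar M N k ∧ j = i' ∧ j' = bar M N k' then
        (-1 : ℂ) ^ (gr M N θ₀ k * gr M N θ₀ k' + gr M N θ₀ j) * th M N k * th M N k'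
      else 0 := by
  rw [gmul3_apply_eq_single (j, j, bar M N j)]
  · simp only [emb13, emb23, K, bar_involutive _, and_true, true_and, if_true, mul_ite, ite_mul,
      mul_zero, zero_mul]
    split_ifs with h₁ h₂ h₃ hc hc hc <;> try first | rfl | (exfalso; tauto)
    obtain ⟨rfl, rfl, rfl⟩ := hc
    simp only [gr_bar]
    rcases gr_eq_zero_or_one (θ₀ := θ₀) j with a | a <;>
    rcases gr_eq_zero_or_one (θ₀ := θ₀) k with b | b <;>
    rcases gr_eq_zero_or_one (θ₀ := θ₀) k' with c | c <;>
    rcases th_eq_one_or_neg_one (bar M N j) with t | t <;>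
    simp only [a, b, c, t] <;> ring
  · rintro ⟨a, b, c⟩ hA hB
    simp only [emb13, emb23, K, ite_ne_right_iff] at hA hB
    obtain ⟨rfl, ⟨-, rfl⟩, -⟩ := hA
    obtain ⟨-, ⟨h, -⟩, -⟩ := hB
    simp [h, bar_involutive _]

lemma gmul3_K₁₂_gmul3_K₁₃_K₂₃_apply (i j k i' j' k' : Fin (M + N)) :
    gmul3 M N θ₀ (emb12 M N (K M N θ₀))
        (gmul3 M N θ₀ (emb13 M N (K M N θ₀)) (emb23 M N (K M N θ₀))) (i, j, k) (i', j', k') =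
      if i = bar M N j ∧ k = i' ∧ j' = bar M N k' then
        (-1 : ℂ) ^ (gr M N θ₀ k * gr M N θ₀ k' + gr M N θ₀ k + gr M N θ₀ k * gr M N θ₀ j) *
          th M N j * th M N k'
      else 0 := by
  rw [gmul3_apply_eq_single (bar M N k, k, k), gmul3_K₁₃_K₂₃_apply]
  · simp only [emb12, K, and_true, true_and, if_true, mul_ite, ite_mul, mul_zero, zero_mul]
    split_ifs with h₁ h₂ hc hc <;> try first | rfl | (exfalso; tauto)
    obtain ⟨rfl, rfl, rfl⟩ := hc
    simp only [gr_bar]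
    rcases gr_eq_zero_or_one (θ₀ := θ₀) j with a | a <;>
    rcases gr_eq_zero_or_one (θ₀ := θ₀) k with b | b <;>
    rcases gr_eq_zero_or_one (θ₀ := θ₀) k' with c | c <;>
    rcases th_eq_one_or_neg_one k with t | t <;>
    simp only [a, b, c, t] <;> ring
  · rintro ⟨a, b, c⟩ hA hB
    rw [gmul3_K₁₃_K₂₃_apply] at hB
    simp only [emb12, K, ite_ne_right_iff] at hA hB
    obtain ⟨rfl, ⟨-, rfl⟩, -⟩ := hA
    obtain ⟨⟨h, -⟩, -⟩ := hB
    obtain rfl := bar_involutive.injective h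
    rfl

lemma gmul3_P₁₃_K₂₃_apply (i j k i' j' k' : Fin (M + N)) :
    gmul3 M N θ₀ (emb13 M N (P M N θ₀)) (emb23 M N (K M N θ₀)) (i, j, k) (i', j', k') =
      if i = bar M N j ∧ k = i' ∧ j' = bar M N k' then
        (-1 : ℂ) ^ (gr M N θ₀ j * gr M N θ₀ k + gr M N θ₀ k * gr M N θ₀ k' +
            gr M N θ₀ j + gr M N θ₀ k) * th M N (bar M N j) * th M N k'
      else 0 := by
  rw [gmul3_apply_eq_single (k, j, i)]
  · simp only [emb13, emb23, P, K, if_true, and_self, mul_ite, mul_zero, eq_bar_comm (i := j)]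
    split_ifs with h₁ h₂ hc hc <;> try first | rfl | (exfalso; tauto)
    obtain ⟨rfl, rfl, rfl⟩ := hc
    simp only [gr_bar]
    rcases gr_eq_zero_or_one (θ₀ := θ₀) j with a | a <;>
    rcases gr_eq_zero_or_one (θ₀ := θ₀) k with b | b <;>
    rcases gr_eq_zero_or_one (θ₀ := θ₀) k' with c | c <;>
    simp only [a, b, c] <;> ring
  · rintro ⟨a, b, c⟩ hA -
    simp only [emb13, P, ite_ne_right_iff] at hA
    obtain ⟨rfl, ⟨rfl, rfl⟩, -⟩ := hA
    rfl

lemma gmul3_P₂₃_K₁₂_apply (i j k i' j' k' : Fin (M + N)) :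
    gmul3 M N θ₀ (emb23 M N (P M N θ₀)) (emb12 M N (K M N θ₀)) (i, j, k) (i', j', k') =
      if i = bar M N k ∧ j = k' ∧ i' = bar M N j' then
        (-1 : ℂ) ^ ((gr M N θ₀ k + gr M N θ₀ j) * (gr M N θ₀ k + gr M N θ₀ j') +
            gr M N θ₀ k + gr M N θ₀ j' * gr M N θ₀ k) * th M N j' * th M N k
      else 0 := by
  rw [gmul3_apply_eq_single (i, k, j)]
  · simp only [emb12, emb23, P, K, if_true, and_self, mul_ite, mul_zero]
    split_ifs with h₁ h₂ hc hc <;> try first | rfl | (exfalso; tauto)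
    obtain ⟨rfl, rfl, rfl⟩ := hc
    simp only [gr_bar]
    rcases gr_eq_zero_or_one (θ₀ := θ₀) j with a | a <;>
    rcases gr_eq_zero_or_one (θ₀ := θ₀) k with b | b <;>
    rcases gr_eq_zero_or_one (θ₀ := θ₀) j' with c | c <;>
    simp only [a, b, c] <;> ring
  · rintro ⟨a, b, c⟩ hA -
    simp only [emb23, P, ite_ne_right_iff] at hA
    obtain ⟨rfl, ⟨rfl, rfl⟩, -⟩ := hA
    rfl

lemma K₁₂_K₁₃_K₂₃_eq (hθ : θ₀ = 1 ∨ θ₀ = -1) (hN : Even N) :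
    gmul3 M N θ₀ (emb12 M N (K M N θ₀))
        (gmul3 M N θ₀ (emb13 M N (K M N θ₀)) (emb23 M N (K M N θ₀))) =
      (θ₀ : ℂ) • gmul3 M N θ₀ (emb13 M N (P M N θ₀)) (emb23 M N (K M N θ₀)) := by
  ext ⟨i, j, k⟩ ⟨i', j', k'⟩
  rw [Matrix.smul_apply, gmul3_K₁₂_gmul3_K₁₃_K₂₃_apply, gmul3_P₁₃_K₂₃_apply, smul_eq_mul,
    mul_ite, mul_zero]
  split_ifs
  · rw [th_eq_mul_th_bar hθ hN j]
    rcases gr_eq_zero_or_one (θ₀ := θ₀) j with a | a <;>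
    rcases gr_eq_zero_or_one (θ₀ := θ₀) k with b | b <;>
    rcases gr_eq_zero_or_one (θ₀ := θ₀) k' with c | c <;>
    rcases hθ with rfl | rfl <;>
    simp only [a, b, c] <;> ring
  · rfl

lemma K₁₂_P₂₃_K₁₂_eq :
    gmul3 M N θ₀ (emb12 M N (K M N θ₀))
        (gmul3 M N θ₀ (emb23 M N (P M N θ₀)) (emb12 M N (K M N θ₀))) =
      emb12 M N (K M N θ₀) := by
  ext ⟨i, j, k⟩ ⟨i', j', k'⟩
  rw [gmul3_apply_eq_single (bar M N k, k, k), gmul3_P₂₃_K₁₂_apply]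
  · simp only [emb12, K, and_true, true_and, if_true, mul_ite, ite_mul, mul_zero, zero_mul]
    split_ifs with h₁ h₂ h₃ h₄ <;> try first | rfl | (exfalso; tauto)
    obtain ⟨rfl, rfl⟩ := h₁
    subst h₂
    simp only [gr_bar]
    rcases gr_eq_zero_or_one (θ₀ := θ₀) j with a | a <;>
    rcases gr_eq_zero_or_one (θ₀ := θ₀) k with b | b <;>
    rcases gr_eq_zero_or_one (θ₀ := θ₀) j' with c | c <;>
    rcases th_eq_one_or_neg_one k with t | t <;>
    simp only [a, b, c, t] <;> ring
  · rintro ⟨a, b, c⟩ hA hB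
    rw [gmul3_P₂₃_K₁₂_apply] at hB
    simp only [emb12, K, ite_ne_right_iff] at hA hB
    obtain ⟨rfl, ⟨-, rfl⟩, -⟩ := hA
    obtain ⟨⟨h, -⟩, -⟩ := hB
    obtain rfl := bar_involutive.injective h
    rfl

end

/-- `K₁₂ K₁₃ K₂₃ = θ₀ P₁₃ K₂₃` and `K₁₂ P₂₃ K₁₂ = K₁₂`. -/
theorem statement8 (hθ : θ₀ = 1 ∨ θ₀ = -1) (hN : Even N) :
    gmul3 M N θ₀ (emb12 M N (K M N θ₀))
        (gmul3 M N θ₀ (emb13 M N (K M N θ₀)) (emb23 M N (K M N θ₀))) =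
      (θ₀ : ℂ) • gmul3 M N θ₀ (emb13 M N (P M N θ₀)) (emb23 M N (K M N θ₀)) ∧
    gmul3 M N θ₀ (emb12 M N (K M N θ₀))
        (gmul3 M N θ₀ (emb23 M N (P M N θ₀)) (emb12 M N (K M N θ₀))) =
      emb12 M N (K M N θ₀) :=
  ⟨K₁₂_K₁₃_K₂₃_eq hθ hN, K₁₂_P₂₃_K₁₂_eq⟩
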